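/- Let A be a C*-algebra and let (x_j)_{j∈J} be a frame in A viewed as a Hilbert module over itself. Then the net of finite partial sums of Σ_j x_j x_j* is bounded in norm: there exists a constant M such that ‖Σ_{j∈F} x_j x_j*‖ ≤ M for every finite subset F ⊆ J. -/

import Mathlib

open scoped ComplexOrder

/-- `g` is a local unit for `a`: `g` is self-adjoint and `a * g = g * a = a`. -/
def IsLocalUnit {A : Type*} [NonUnitalRing A] [StarRing A] (g a : A) : Prop :=
  IsSelfAdjoint g ∧ a * g = a ∧ g * a = a

/-- A state on a C*-algebra: a positive linear functional of norm 1. -/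
def IsState {A : Type*} [NonUnitalCStarAlgebra A] [PartialOrder A] [StarOrderedRing A]
    (φ : A →L[ℂ] ℂ) : Prop :=
  ‖φ‖ = 1 ∧ ∀ a : A, 0 ≤ a → 0 ≤ φ a

/-- `(x j)_{j ∈ J}` is a frame (state criterion) with frame bounds `c₁, c₂` for the
C*-algebra `A` viewed as a Hilbert module over itself, where `⟪a, b⟫ = a* b`. -/
def IsFrame {A : Type*} [NonUnitalCStarAlgebra A] [PartialOrder A] [StarOrderedRing A]
    {J : Type*} (x : J → A) (c₁ c₂ : ℝ) : Prop :=
  0 < c₁ ∧ 0 < c₂ ∧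
  ∀ (y : A) (φ : A →L[ℂ] ℂ), IsState φ →
    Summable (fun j => φ (star y * (x j * star (x j)) * y)) ∧
    (c₁ : ℂ) * φ (star y * y) ≤ ∑' j, φ (star y * (x j * star (x j)) * y) ∧
    ∑' j, φ (star y * (x j * star (x j)) * y) ≤ (c₂ : ℂ) * φ (star y * y)

/-! Let `S` be a finite partial sum of `Σ x_j x_j*`; it is positive. For a state `φ` and `y = √S`,
the upper frame bound gives `φ(S²) = Σ_{j ∈ F} φ(y x_j x_j* y) ≤ c₂ φ(S) ≤ c₂ ‖S‖`, so a state with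
`φ(S²) = ‖S²‖ = ‖S‖²` yields `‖S‖ ≤ c₂`. Such a state comes from the unitization: a functional of
norm at most one attaining `‖ ‖a‖ + a ‖ = 2 ‖a‖` must send `1` to `1`, and a functional with
`‖g‖ ≤ 1 = g 1` is positive (the imaginary part of `g a` for self-adjoint `a` is controlled by
`‖a + t i‖² ≤ ‖a‖² + t²` for all real `t`). -/

lemma Complex.eq_one_of_norm_le_one_of_one_le_re {u : ℂ} (hu : ‖u‖ ≤ 1) (hre : 1 ≤ u.re) :
    u = 1 := by
  have hsq : u.re * u.re + u.im * u.im ≤ 1 := by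
    rw [← Complex.normSq_apply, ← Complex.sq_norm]
    nlinarith [norm_nonneg u]
  apply Complex.ext <;> simp only [Complex.one_re, Complex.one_im] <;> nlinarith

section Unital

variable {B : Type*} [CStarAlgebra B] [Nontrivial B]

lemma IsSelfAdjoint.norm_add_I_smul_one_sq_le {a : B} (ha : IsSelfAdjoint a) (t : ℝ) :
    ‖a + ((t : ℂ) * Complex.I) • (1 : B)‖ ^ 2 ≤ ‖a‖ ^ 2 + t ^ 2 := by
  have hstar :
      star (a + ((t : ℂ) * Complex.I) • (1 : B)) * (a + ((t : ℂ) * Complex.I) • (1 : B))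
        = a * a + ((t : ℂ) ^ 2) • (1 : B) := by
    have hI : star ((t : ℂ) * Complex.I) = -((t : ℂ) * Complex.I) := by simp
    have hII : (t : ℂ) * Complex.I * ((t : ℂ) * Complex.I) = -(t : ℂ) ^ 2 := by
      rw [← sq, mul_pow, Complex.I_sq]
      ring
    rw [star_add, ha.star_eq, star_smul, star_one, hI]
    simp only [add_mul, mul_add, neg_mul, smul_mul_assoc, mul_smul_comm, one_mul, mul_one,
      neg_smul, smul_add, smul_neg, smul_smul, hII, neg_neg]
    abel
  calc _ = ‖a * a + ((t : ℂ) ^ 2) • (1 : B)‖ := by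
        rw [← hstar, CStarRing.norm_star_mul_self, sq]
    _ ≤ ‖a‖ ^ 2 + t ^ 2 := by
        refine (norm_add_le _ _).trans_eq ?_
        rw [ha.norm_mul_self, norm_smul]
        simp [sq]

lemma IsSelfAdjoint.im_apply_eq_zero_of_norm_le_one_of_map_one {a : B} (ha : IsSelfAdjoint a)
    {g : StrongDual ℂ B} (hg : ‖g‖ ≤ 1) (h1 : g 1 = 1) : (g a).im = 0 := by
  set v := (g a).im
  have key : ∀ t : ℝ, (v + t) ^ 2 ≤ ‖a‖ ^ 2 + t ^ 2 := fun t => by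
    have him : (g (a + ((t : ℂ) * Complex.I) • (1 : B))).im = v + t := by simp [h1, v]
    calc (v + t) ^ 2 = |(g (a + ((t : ℂ) * Complex.I) • (1 : B))).im| ^ 2 := by rw [him, sq_abs]
      _ ≤ ‖a + ((t : ℂ) * Complex.I) • (1 : B)‖ ^ 2 := by
        gcongr
        exact (Complex.abs_im_le_norm _).trans ((g.le_of_opNorm_le hg _).trans_eq (one_mul _))
      _ ≤ _ := ha.norm_add_I_smul_one_sq_le t
  by_contra hv
  -- `t = ‖a‖² / v` turns `key` into `v² + ‖a‖² ≤ 0`.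
  have hsq : (v + ‖a‖ ^ 2 / v) ^ 2 = v ^ 2 + 2 * ‖a‖ ^ 2 + (‖a‖ ^ 2 / v) ^ 2 := by
    field_simp
    ring
  nlinarith [key (‖a‖ ^ 2 / v), sq_pos_of_ne_zero hv, sq_nonneg ‖a‖]

variable [PartialOrder B] [StarOrderedRing B]

lemma apply_nonneg_of_norm_le_one_of_map_one {g : StrongDual ℂ B} (hg : ‖g‖ ≤ 1)
    (h1 : g 1 = 1) {a : B} (ha : 0 ≤ a) : 0 ≤ g a := by
  have hd0 : 0 ≤ algebraMap ℝ B ‖a‖ - a :=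
    sub_nonneg.mpr ((CStarAlgebra.norm_le_iff_le_algebraMap a (norm_nonneg a) ha).mp le_rfl)
  have hd : ‖algebraMap ℝ B ‖a‖ - a‖ ≤ ‖a‖ :=
    (CStarAlgebra.norm_le_iff_le_algebraMap _ (norm_nonneg a) hd0).mpr (sub_le_self _ ha)
  have hgd : g (algebraMap ℝ B ‖a‖ - a) = ‖a‖ - g a := by
    simp [Algebra.algebraMap_eq_smul_one, h1]
  have hre : ‖a‖ - (g a).re ≤ ‖a‖ := by
    simpa [hgd] using (Complex.re_le_norm _).trans
      (((g.le_of_opNorm_le hg _).trans_eq (one_mul _)).trans hd)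
  exact Complex.nonneg_iff.mpr ⟨by linarith,
    (ha.isSelfAdjoint.im_apply_eq_zero_of_norm_le_one_of_map_one hg h1).symm⟩

lemma CStarAlgebra.norm_algebraMap_norm_add_self {a : B} (ha : 0 ≤ a) :
    ‖algebraMap ℝ B ‖a‖ + a‖ = 2 * ‖a‖ := by
  refine le_antisymm ?_ ?_
  · calc _ ≤ ‖algebraMap ℝ B ‖a‖‖ + ‖a‖ := norm_add_le _ _
      _ = 2 * ‖a‖ := by rw [norm_algebraMap', Real.norm_of_nonneg (norm_nonneg a)]; ring
  · have hmem : ‖a‖ + ‖a‖ ∈ spectrum ℝ (algebraMap ℝ B ‖a‖ + a) :=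
      spectrum.add_mem_add_iff.mpr (CStarAlgebra.norm_mem_spectrum_of_nonneg ha)
    rw [two_mul]
    exact (le_abs_self _).trans (spectrum.norm_le_norm_of_mem hmem)

lemma CStarAlgebra.exists_strongDual_map_one_apply_eq_norm {a : B} (ha : 0 ≤ a) :
    ∃ g : StrongDual ℂ B, ‖g‖ ≤ 1 ∧ g 1 = 1 ∧ g a = ‖a‖ := by
  rcases eq_or_ne a 0 with rfl | ha0
  · obtain ⟨g, hg, hg1⟩ := exists_dual_vector'' ℂ (1 : B)
    exact ⟨g, hg, by simpa using hg1, by simp⟩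
  obtain ⟨g, hg, hgb⟩ := exists_dual_vector'' ℂ (algebraMap ℝ B ‖a‖ + a)
  have hpos : 0 < ‖a‖ := norm_pos_iff.mpr ha0
  have hnorm_le : ∀ b : B, ‖g b‖ ≤ ‖b‖ := fun b => by
    simpa using g.le_of_opNorm_le hg b
  have hsum : (‖a‖ : ℂ) * g 1 + g a = 2 * ‖a‖ := by
    rw [norm_algebraMap_norm_add_self ha] at hgb
    simpa [Algebra.algebraMap_eq_smul_one] using hgb
  have h1 : g 1 = 1 := by
    refine Complex.eq_one_of_norm_le_one_of_one_le_re (by simpa using hnorm_le 1) ?_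
    have hre : ‖a‖ * (g 1).re + (g a).re = 2 * ‖a‖ := by simpa using congrArg Complex.re hsum
    have := (Complex.re_le_norm (g a)).trans (hnorm_le a)
    nlinarith
  refine ⟨g, hg, h1, ?_⟩
  rw [h1] at hsum
  linear_combination hsum

end Unital

section NonUnital

variable {A : Type*} [NonUnitalCStarAlgebra A] [PartialOrder A] [StarOrderedRing A]

lemma exists_isState_apply_eq_norm {a : A} (ha : 0 ≤ a) (ha0 : a ≠ 0) :
    ∃ φ : A →L[ℂ] ℂ, IsState φ ∧ φ a = ‖a‖ := by
  obtain ⟨g, hg, hg1, hga⟩ :=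
    CStarAlgebra.exists_strongDual_map_one_apply_eq_norm (Unitization.inr_nonneg_iff.mpr ha)
  let φ : A →L[ℂ] ℂ := g.comp ⟨Unitization.inrHom ℂ ℂ A, Unitization.continuous_inr⟩
  have hφ : ∀ b : A, φ b = g b := fun _ => rfl
  have hφa : φ a = ‖a‖ := by rw [hφ, hga, Unitization.norm_inr]
  have hφ_le : ‖φ‖ ≤ 1 := φ.opNorm_le_bound zero_le_one fun b => by
    rw [hφ, ← Unitization.norm_inr (𝕜 := ℂ) b]
    exact g.le_of_opNorm_le hg _
  refine ⟨φ, ⟨le_antisymm hφ_le ?_, fun b hb => ?_⟩, hφa⟩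
  · have := φ.le_opNorm a
    rw [hφa, Complex.norm_real, Real.norm_of_nonneg (norm_nonneg a)] at this
    exact le_of_mul_le_mul_right (by simpa using this) (norm_pos_iff.mpr ha0)
  · exact apply_nonneg_of_norm_le_one_of_map_one hg hg1 (Unitization.inr_nonneg_iff.mpr hb)

lemma IsState.norm_apply_le {φ : A →L[ℂ] ℂ} (hφ : IsState φ) (a : A) : ‖φ a‖ ≤ ‖a‖ := by
  simpa [hφ.1] using φ.le_opNorm a

lemma norm_le_of_forall_isState_apply_mul_self_le {a : A} (ha : 0 ≤ a) {c : ℝ} (hc : 0 ≤ c)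
    (h : ∀ φ : A →L[ℂ] ℂ, IsState φ → φ (a * a) ≤ c * φ a) : ‖a‖ ≤ c := by
  rcases eq_or_ne a 0 with rfl | ha0
  · simpa using hc
  have hsa : IsSelfAdjoint a := .of_nonneg ha
  have haa : 0 ≤ a * a := by simpa [hsa.star_eq] using star_mul_self_nonneg a
  obtain ⟨φ, hφ, hφa⟩ := exists_isState_apply_eq_norm haa
    (norm_ne_zero_iff.mp (by rw [hsa.norm_mul_self]; positivity))
  have key : ‖a‖ ^ 2 ≤ c * (φ a).re := by
    simpa [hφa, hsa.norm_mul_self, ← Complex.ofReal_pow] using (Complex.le_def.mp (h φ hφ)).1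
  have hre : (φ a).re ≤ ‖a‖ := (Complex.re_le_norm _).trans (hφ.norm_apply_le a)
  have hpos : 0 < ‖a‖ := norm_pos_iff.mpr ha0
  nlinarith

lemma IsFrame.apply_conj_sum_le {J : Type*} {x : J → A} {c₁ c₂ : ℝ} (hx : IsFrame x c₁ c₂)
    (F : Finset J) (y : A) {φ : A →L[ℂ] ℂ} (hφ : IsState φ) :
    φ (star y * (∑ j ∈ F, x j * star (x j)) * y) ≤ c₂ * φ (star y * y) := by
  obtain ⟨hsum, -, hle⟩ := hx.2.2 y φ hφ
  calc φ (star y * (∑ j ∈ F, x j * star (x j)) * y)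
      = ∑ j ∈ F, φ (star y * (x j * star (x j)) * y) := by
        rw [Finset.mul_sum, Finset.sum_mul, map_sum]
    _ ≤ ∑' j, φ (star y * (x j * star (x j)) * y) :=
        hsum.sum_le_tsum F fun j _ =>
          hφ.2 _ (star_left_conjugate_nonneg (mul_star_self_nonneg _) y)
    _ ≤ c₂ * φ (star y * y) := hle

end NonUnital

/-- For a frame `(x j)` in a C*-algebra `A` (as a Hilbert module over itself), the net of
finite partial sums of `Σ_j x_j x_j*` is bounded in norm. -/
theorem frame_partial_sums_bounded {A : Type*} [NonUnitalCStarAlgebra A]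
    [PartialOrder A] [StarOrderedRing A] {J : Type*} (x : J → A) (c₁ c₂ : ℝ)
    (hx : IsFrame x c₁ c₂) :
    ∃ M : ℝ, ∀ F : Finset J, ‖∑ j ∈ F, x j * star (x j)‖ ≤ M := by
  refine ⟨c₂, fun F => ?_⟩
  set S := ∑ j ∈ F, x j * star (x j)
  have hS : 0 ≤ S := Finset.sum_nonneg fun j _ => mul_star_self_nonneg (x j)
  refine norm_le_of_forall_isState_apply_mul_self_le hS hx.2.1.le fun φ hφ => ?_
  obtain ⟨y, hy, hyy⟩ : ∃ y : A, 0 ≤ y ∧ y * y = S :=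
    ⟨CFC.sqrt S, CFC.sqrt_nonneg S, CFC.sqrt_mul_sqrt_self S hS⟩
  have hystar : star y = y := hy.isSelfAdjoint.star_eq
  calc φ (S * S) = φ (star y * S * y) := by rw [hystar, ← hyy]; simp only [mul_assoc]
    _ ≤ c₂ * φ (star y * y) := hx.apply_conj_sum_le F y hφ
    _ = c₂ * φ S := by rw [hystar, hyy]
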